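/- For every left preferred Gauss code w on n letters, the shift^LP-orbit {w, shift^LP(w), …, (shift^LP)^{n−1}(w)} contains exactly one left canonical Gauss code, namely its lexicographically smallest element. -/

import Mathlib

/-- A Gauss code on `n` letters: a bijection from the `2*n` positions to
letters paired with a side (`false` = L, `true` = R). -/
abbrev GaussCode (n : ℕ) := Fin (2 * n) ≃ Fin n × Bool

instance (n : ℕ) [NeZero n] : NeZero (2 * n) := ⟨by have := NeZero.ne n; omega⟩

namespace GaussCode

variable {n : ℕ}

/-- `π_*(w)`: relabel the letters by the permutation `π`. -/
def permAct (π : Equiv.Perm (Fin n)) (w : GaussCode n) : GaussCode n :=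
  w.trans (π.prodCongr (Equiv.refl Bool))

/-- `shift[m](w)`: the code whose entry at position `i` is the entry of `w` at
position `i + m` (mod `2n`). -/
def shift [NeZero n] (m : ℕ) (w : GaussCode n) : GaussCode n :=
  (Equiv.addRight (Fin.ofNat (2 * n) m)).trans w

/-- `rev(w)`: the code whose entry at position `i` is the entry of `w` at
position `2n - 1 - i`. -/
def rev (w : GaussCode n) : GaussCode n :=
  (Fin.revPerm).trans w

/-- A Gauss code is left preferred if its `L`-entries appear in the order
`(1,L), (2,L), …, (n,L)` and its entry at position `0` is `(1,L)`. -/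
def IsLeftPreferred [NeZero n] (w : GaussCode n) : Prop :=
  StrictMono (fun j : Fin n => w.symm (j, false)) ∧ w 0 = (0, false)

/-- `proj^LP(w)`: relabel letters in the order of appearance of their `L`-entries,
then rotate so that `(1,L)` is at position `0`. -/
def projLP [NeZero n] (w : GaussCode n) : GaussCode n :=
  let π : Equiv.Perm (Fin n) := (Tuple.sort (fun j : Fin n => w.symm (j, false)))⁻¹
  let w' := permAct π w
  shift ((w'.symm ((0 : Fin n), false)).val) w'

/-- `shift^LP(w) := proj^LP(shift[1](w))`. -/
def shiftLP [NeZero n] (w : GaussCode n) : GaussCode n :=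
  projLP (shift 1 w)

/-- `rev^LP(w) := proj^LP(rev(w))`. -/
def revLP [NeZero n] (w : GaussCode n) : GaussCode n :=
  projLP (rev w)

/-- The value of an entry in the order `(1,L) < (1,R) < (2,L) < (2,R) < …`. -/
def entryKey (e : Fin n × Bool) : ℕ :=
  2 * e.1.val + (if e.2 then 1 else 0)

/-- Lexicographic (strict) order on Gauss codes, comparing entries position by
position in the order `(1,L) < (1,R) < (2,L) < (2,R) < …`. -/
def lexLt (w w' : GaussCode n) : Prop :=
  ∃ i : Fin (2 * n), (∀ k, k < i → w k = w' k) ∧ entryKey (w i) < entryKey (w' i)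

/-- Lexicographic order on Gauss codes. -/
def lexLe (w w' : GaussCode n) : Prop :=
  w = w' ∨ lexLt w w'

/-- A left preferred Gauss code is left canonical if it is the smallest element
of its `shift^LP`-orbit `{w, shift^LP(w), …, (shift^LP)^{n-1}(w)}`. -/
def IsLeftCanonical [NeZero n] (w : GaussCode n) : Prop :=
  IsLeftPreferred w ∧ ∀ k < n, lexLe w (shiftLP^[k] w)

/-- `proj^LC(w)`: the smallest element of the `shift^LP`-orbit of `proj^LP(w)`. -/
noncomputable def projLC [NeZero n] (w : GaussCode n) : GaussCode n :=
  letI := Classical.propDecidable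
  if h : ∃ v : GaussCode n, (∃ k < n, v = shiftLP^[k] (projLP w)) ∧
      ∀ k < n, lexLe v (shiftLP^[k] (projLP w))
  then h.choose else projLP w

/-- `rev^LC(w) := proj^LC(rev(w))`. -/
noncomputable def revLC [NeZero n] (w : GaussCode n) : GaussCode n :=
  projLC (rev w)

/-- Oriented equivalence of Gauss codes: `w' = shift[m](π_*(w))` for some
permutation `π` and integer `m`. -/
def OrientedEquiv [NeZero n] (w w' : GaussCode n) : Prop :=
  ∃ (π : Equiv.Perm (Fin n)) (m : ℕ), w' = shift m (permAct π w)

/-- Unoriented equivalence: `w` is orientedly equivalent to `w'` or to `rev(w')`. -/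
def UnorientedEquiv [NeZero n] (w w' : GaussCode n) : Prop :=
  OrientedEquiv w w' ∨ OrientedEquiv w (rev w')

/-- A Gauss code is 1-reducible if two cyclically adjacent entries share the same letter. -/
def OneReducible [NeZero n] (w : GaussCode n) : Prop :=
  ∃ i : Fin (2 * n), (w i).1 = (w (i + 1)).1

/-- A Gauss code is 2-reducible (cyclically, with `L = false`, `R = true`). -/
def TwoReducible [NeZero n] (w : GaussCode n) : Prop :=
  ∃ (i i' : Fin (2 * n)) (j k : Fin n), j ≠ k ∧
    ((w i = (j, false) ∧ w (i + 1) = (k, true) ∧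
        w i' = (j, true) ∧ w (i' + 1) = (k, false)) ∨
     (w i = (j, false) ∧ w (i + 1) = (k, true) ∧
        w i' = (k, false) ∧ w (i' + 1) = (j, true)) ∨
     (w i = (j, true) ∧ w (i + 1) = (k, false) ∧
        w i' = (k, true) ∧ w (i' + 1) = (j, false)))

/-- A Gauss code is minimal if it is neither 1-reducible nor 2-reducible. -/
def IsMinimal [NeZero n] (w : GaussCode n) : Prop :=
  ¬ OneReducible w ∧ ¬ TwoReducible w

/-- `σ_w`: the involution of positions sending each position to the unique other
position carrying the same letter. -/
def sigmaMap (w : GaussCode n) : Fin (2 * n) → Fin (2 * n) :=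
  fun i => w.symm ((w i).1, !(w i).2)

/-- `h_w`: the side (`false` = L, `true` = R) of the entry at each position. -/
def hMap (w : GaussCode n) : Fin (2 * n) → Bool :=
  fun i => (w i).2

end GaussCode

/-!
Let `w` be left preferred, with `L`-entries at positions `p₀ = 0 < p₁ < ⋯ < p_{n-1}`.
Applying `proj^LP` to `shift[m] w` and to `shift[m+1] w` gives the same code whenever the entry
at position `m` is an `R`-entry, so `proj^LP (shift[m] w)` only depends on the first `L`-entry at
or after `m`. Hence `(shift^LP)^k w = proj^LP (shift[p_k] w)` and the orbit has period `n`.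
Left canonical elements of the orbit are then exactly its lexicographically minimal elements, and
since the lexicographic order is linear there is exactly one of them.
-/

open Fin.NatCast

lemma Function.IsPeriodicPt.forall_iterate_iterate_iff {α : Type*} {f : α → α} {x : α} {n : ℕ}
    (h : IsPeriodicPt f n x) (hn : 0 < n) (k : ℕ) (P : α → Prop) :
    (∀ j < n, P (f^[j] (f^[k] x))) ↔ ∀ j < n, P (f^[j] x) := by
  rw [← h.iterate_mod_apply k]
  have hk := Nat.mod_lt k hn
  have hshift : ∀ j, f^[j] (f^[k % n] x) = f^[(j + k % n) % n] x := fun j => by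
    rw [← Function.iterate_add_apply, h.iterate_mod_apply]
  refine ⟨fun hP j hj => ?_, fun hP j _ => hshift j ▸ hP _ (Nat.mod_lt _ hn)⟩
  have hj' : ((j + n - k % n) % n + k % n) % n = j := by
    rw [Nat.mod_add_mod, Nat.sub_add_cancel (by omega), Nat.add_mod_right, Nat.mod_eq_of_lt hj]
  simpa only [hshift, hj'] using hP _ (Nat.mod_lt (j + n - k % n) hn)

namespace GaussCode

variable {n : ℕ}

@[simp] lemma permAct_apply (π : Equiv.Perm (Fin n)) (w : GaussCode n) (i : Fin (2 * n)) :
    permAct π w i = (π (w i).1, (w i).2) := rfl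

@[simp] lemma permAct_symm_apply (π : Equiv.Perm (Fin n)) (w : GaussCode n) (e : Fin n × Bool) :
    (permAct π w).symm e = w.symm (π.symm e.1, e.2) := rfl

lemma permAct_one (w : GaussCode n) : permAct 1 w = w := rfl

def lPos (w : GaussCode n) (j : Fin n) : Fin (2 * n) := w.symm (j, false)

lemma apply_lPos (w : GaussCode n) (j : Fin n) : w (lPos w j) = (j, false) :=
  w.apply_symm_apply _

lemma eq_lPos_of_isL {w : GaussCode n} {i : Fin (2 * n)} (h : (w i).2 = false) :
    i = lPos w (w i).1 := by
  rw [lPos, Equiv.eq_symm_apply, ← h]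

lemma isR_of_lPos_lt {w : GaussCode n} (hw : StrictMono (lPos w)) {k : Fin n} {i : Fin (2 * n)}
    (hk : lPos w k < i) (hi : ∀ k', k < k' → i < lPos w k') : (w i).2 = true := by
  by_contra hR
  have hi' := eq_lPos_of_isL (Bool.eq_false_iff.mpr hR)
  rcases lt_or_ge k (w i).1 with h | h
  · exact (hi _ h).ne hi'
  · exact (hw.monotone h).not_gt (hi' ▸ hk)

lemma permAct_eq_self {w : GaussCode n} {σ : Equiv.Perm (Fin n)} (hw : StrictMono (lPos w))
    (h : StrictMono (lPos (permAct σ w))) : permAct σ w = w := by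
  have hrange : Set.range (lPos w ∘ σ.symm) = Set.range (lPos w) := σ.symm.surjective.range_comp _
  have hσ : lPos w ∘ σ.symm = lPos w := (StrictMono.range_inj h hw).mp hrange
  have hσ' : ∀ j, σ j = j := fun j => by
    simpa using (hw.injective (congrFun hσ (σ j))).symm
  ext i <;> simp [hσ']

noncomputable def lOrderPerm (w : GaussCode n) : Equiv.Perm (Fin n) :=
  (Tuple.sort (lPos w))⁻¹

lemma lPos_permAct_lOrderPerm (w : GaussCode n) :
    lPos (permAct (lOrderPerm w) w) = lPos w ∘ Tuple.sort (lPos w) := rfl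

lemma strictMono_lPos_permAct_lOrderPerm (w : GaussCode n) :
    StrictMono (lPos (permAct (lOrderPerm w) w)) :=
  (Tuple.monotone_sort (lPos w)).strictMono_of_injective
    ((w.symm.injective.comp (Prod.mk_left_injective false)).comp (Equiv.injective _))

section Shift

variable [NeZero n]

lemma shift_apply (m : ℕ) (w : GaussCode n) (i : Fin (2 * n)) :
    shift m w i = w (i + m) := rfl

lemma shift_shift (a b : ℕ) (w : GaussCode n) : shift a (shift b w) = shift (b + a) w := by
  ext i <;> simp only [shift_apply, Nat.cast_add, add_assoc, add_comm (a : Fin (2 * n))]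

lemma lPos_shift (m : ℕ) (w : GaussCode n) (j : Fin n) : lPos (shift m w) j = lPos w j - m := by
  simp [lPos, shift, sub_eq_add_neg]

lemma shift_zero (w : GaussCode n) : shift 0 w = w := by
  ext i <;> simp [shift_apply]

lemma shift_two_mul (w : GaussCode n) : shift (2 * n) w = w := by
  ext i <;> simp [shift_apply]

lemma shift_permAct (m : ℕ) (π : Equiv.Perm (Fin n)) (w : GaussCode n) :
    shift m (permAct π w) = permAct π (shift m w) := rfl

end Shift

section ProjLP

variable [NeZero n]

noncomputable def firstLPos (w : GaussCode n) : Fin (2 * n) :=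
  lPos (permAct (lOrderPerm w) w) 0

lemma projLP_eq_shift_firstLPos (w : GaussCode n) :
    projLP w = shift (firstLPos w).val (permAct (lOrderPerm w) w) := rfl

lemma firstLPos_isL (w : GaussCode n) : (w (firstLPos w)).2 = false := by
  simp [firstLPos, lPos]

lemma firstLPos_le (w : GaussCode n) {i : Fin (2 * n)} (hi : (w i).2 = false) :
    firstLPos w ≤ i := by
  rw [eq_lPos_of_isL hi, firstLPos, lPos_permAct_lOrderPerm]
  calc lPos w (Tuple.sort (lPos w) 0)
      ≤ lPos w (Tuple.sort (lPos w) ((Tuple.sort (lPos w)).symm (w i).1)) :=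
        Tuple.monotone_sort (lPos w) (Fin.zero_le _)
    _ = lPos w (w i).1 := by simp

lemma firstLPos_eq_zero {w : GaussCode n} (h : (w 0).2 = false) : firstLPos w = 0 :=
  le_antisymm (firstLPos_le w h) (Fin.zero_le _)

lemma firstLPos_permAct (π : Equiv.Perm (Fin n)) (w : GaussCode n) :
    firstLPos (permAct π w) = firstLPos w :=
  le_antisymm (firstLPos_le _ (firstLPos_isL w)) (firstLPos_le _ (firstLPos_isL (permAct π w)))

lemma isLeftPreferred_projLP (w : GaussCode n) : IsLeftPreferred (projLP w) := by
  have hu := strictMono_lPos_permAct_lOrderPerm w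
  have hfirst : ∀ j, firstLPos w ≤ lPos (permAct (lOrderPerm w) w) j :=
    fun j => hu.monotone (Fin.zero_le j)
  refine ⟨fun a b hab => ?_, ?_⟩
  · show lPos (projLP w) a < lPos (projLP w) b
    have hlt := Fin.lt_def.mp (hu hab)
    have hle := Fin.le_def.mp (hfirst a)
    rw [projLP_eq_shift_firstLPos, lPos_shift, lPos_shift, Fin.cast_val_eq_self, Fin.lt_def,
      Fin.sub_val_of_le (hfirst a), Fin.sub_val_of_le (hfirst b)]
    omega
  · show permAct (lOrderPerm w) w (0 + (firstLPos w).val) = (0, false)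
    rw [Fin.cast_val_eq_self, zero_add]
    exact Equiv.apply_symm_apply _ _

lemma projLP_eq_of_isLeftPreferred {w : GaussCode n} {m : ℕ} {π : Equiv.Perm (Fin n)}
    (hm : (m : Fin (2 * n)) = firstLPos w) (h : IsLeftPreferred (shift m (permAct π w))) :
    projLP w = shift m (permAct π w) := by
  have hrel : shift m (permAct π w) = permAct ((lOrderPerm w).symm.trans π) (projLP w) := by
    ext i <;> simp [projLP_eq_shift_firstLPos, shift_apply, hm]
  rw [hrel] at h ⊢
  exact (permAct_eq_self (isLeftPreferred_projLP w).1 h.1).symm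

lemma projLP_of_isLeftPreferred {w : GaussCode n} (hw : IsLeftPreferred w) : projLP w = w := by
  have hm : ((0 : ℕ) : Fin (2 * n)) = firstLPos w := by
    rw [firstLPos_eq_zero (by rw [hw.2]), Nat.cast_zero]
  have := projLP_eq_of_isLeftPreferred (π := 1) hm (by rwa [permAct_one, shift_zero])
  rwa [permAct_one, shift_zero] at this

lemma projLP_permAct (π : Equiv.Perm (Fin n)) (w : GaussCode n) :
    projLP (permAct π w) = projLP w := by
  have h : projLP (permAct π w)
      = shift (firstLPos (permAct π w)).val (permAct (π.trans (lOrderPerm (permAct π w))) w) :=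
    projLP_eq_shift_firstLPos _
  rw [h]
  refine (projLP_eq_of_isLeftPreferred ?_ ?_).symm
  · rw [Fin.cast_val_eq_self, firstLPos_permAct]
  · rw [← h]; exact isLeftPreferred_projLP _

lemma projLP_shift_one {w : GaussCode n} (h : (w 0).2 = true) :
    projLP (shift 1 w) = projLP w := by
  set M := firstLPos w
  set M' := firstLPos (shift 1 w)
  have hM : M.val ≠ 0 := by
    intro h0
    have hL : (w M).2 = false := firstLPos_isL w
    rw [show M = 0 from Fin.ext h0, h] at hL
    cases hL
  have hle : M'.val ≤ M.val - 1 := by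
    have hL : (shift 1 w ((M.val - 1 : ℕ) : Fin (2 * n))).2 = false := by
      rw [shift_apply, ← Nat.cast_add, Nat.sub_add_cancel (Nat.one_le_iff_ne_zero.2 hM),
        Fin.cast_val_eq_self]
      exact firstLPos_isL w
    have := Fin.le_def.mp (firstLPos_le _ hL)
    rwa [Fin.val_natCast, Nat.mod_eq_of_lt (by omega)] at this
  have hge : M.val ≤ M'.val + 1 := by
    have : M ≤ M' + 1 := firstLPos_le w (firstLPos_isL (shift 1 w))
    rwa [Fin.le_def, Fin.val_add_one_of_lt' (by omega)] at this
  -- the first `L`-position of `shift[1] w` is one less than that of `w`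
  have hcast : ((1 + M'.val : ℕ) : Fin (2 * n)) = M := by
    ext
    rw [Fin.val_natCast, Nat.mod_eq_of_lt (by omega)]
    omega
  have hproj : projLP (shift 1 w)
      = shift (1 + M'.val) (permAct (lOrderPerm (shift 1 w)) w) := by
    rw [projLP_eq_shift_firstLPos, ← shift_permAct, shift_shift]
  rw [hproj]
  exact (projLP_eq_of_isLeftPreferred hcast (hproj ▸ isLeftPreferred_projLP _)).symm

lemma projLP_shift_eq_of_isR {w : GaussCode n} {a b : ℕ} (hab : a ≤ b)
    (hR : ∀ i : ℕ, a ≤ i → i < b → (w i).2 = true) :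
    projLP (shift b w) = projLP (shift a w) := by
  induction b, hab using Nat.le_induction with
  | base => rfl
  | succ b hab ih =>
    rw [← shift_shift, projLP_shift_one (by simpa [shift_apply] using hR b hab (by omega)),
      ih fun i hi hib => hR i hi (by omega)]

end ProjLP

section Orbit

variable [NeZero n]

lemma shiftLP_projLP_shift {w : GaussCode n} {p : ℕ} (hp : (w p).2 = false) :
    shiftLP (projLP (shift p w)) = projLP (shift (p + 1) w) := by
  have h0 : firstLPos (shift p w) = 0 := firstLPos_eq_zero (by rwa [shift_apply, zero_add])
  rw [projLP_eq_shift_firstLPos (shift p w), h0, Fin.val_zero, shift_zero, shiftLP, shift_permAct,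
    projLP_permAct, shift_shift]

lemma lPos_zero {w : GaussCode n} (hw : IsLeftPreferred w) : lPos w 0 = 0 := by
  rw [lPos, Equiv.symm_apply_eq, hw.2]

lemma projLP_shift_lPos_add_one {w : GaussCode n} (hw : StrictMono (lPos w)) {k : Fin n} {b : ℕ}
    (hkb : (lPos w k).val < b) (hb : b ≤ 2 * n) (hnext : ∀ k', k < k' → b ≤ (lPos w k').val) :
    projLP (shift ((lPos w k).val + 1) w) = projLP (shift b w) := by
  refine (projLP_shift_eq_of_isR hkb fun i hki hib =>
    isR_of_lPos_lt hw (k := k) ?_ fun k' hk' => ?_).symm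
  all_goals rw [Fin.lt_def, Fin.val_natCast, Nat.mod_eq_of_lt (by omega)]
  · omega
  · exact hib.trans_le (hnext k' hk')

lemma projLP_shift_lPos_succ {w : GaussCode n} (hw : IsLeftPreferred w) (k : Fin n) :
    projLP (shift ((lPos w k).val + 1) w) = projLP (shift (lPos w (k + 1)).val w) := by
  have hmono : StrictMono (lPos w) := hw.1
  by_cases hk : k.val + 1 < n
  · have hsucc : (k + 1).val = k.val + 1 := Fin.val_add_one_of_lt' hk
    refine projLP_shift_lPos_add_one hmono (hmono (Fin.lt_def.mpr (by omega))) (Fin.is_lt _).le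
      fun k' hk' => hmono.monotone (Fin.le_def.mpr ?_)
    rw [Fin.lt_def] at hk'
    omega
  · have hk0 : k + 1 = 0 := by
      ext
      rw [Fin.val_add, Fin.val_one', Nat.add_mod_mod, Fin.val_zero]
      have := k.is_lt
      rw [show k.val + 1 = n by omega, Nat.mod_self]
    rw [hk0, lPos_zero hw, Fin.val_zero, shift_zero]
    refine (projLP_shift_lPos_add_one hmono (lPos w k).is_lt le_rfl fun k' hk' => ?_).trans
      (by rw [shift_two_mul])
    have := k'.is_lt
    rw [Fin.lt_def] at hk'
    omega

lemma iterate_shiftLP {w : GaussCode n} (hw : IsLeftPreferred w) (k : ℕ) :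
    shiftLP^[k] w = projLP (shift (lPos w k).val w) := by
  induction k with
  | zero =>
    rw [Function.iterate_zero_apply, Nat.cast_zero, lPos_zero hw, Fin.val_zero, shift_zero,
      projLP_of_isLeftPreferred hw]
  | succ k ih =>
    have hL : (w (lPos w k).val).2 = false := by rw [Fin.cast_val_eq_self, apply_lPos]
    rw [Function.iterate_succ_apply', ih, shiftLP_projLP_shift hL, projLP_shift_lPos_succ hw,
      Nat.cast_succ]

lemma isLeftPreferred_iterate_shiftLP {w : GaussCode n} (hw : IsLeftPreferred w) (k : ℕ) :
    IsLeftPreferred (shiftLP^[k] w) := by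
  rw [iterate_shiftLP hw]
  exact isLeftPreferred_projLP _

lemma isPeriodicPt_shiftLP {w : GaussCode n} (hw : IsLeftPreferred w) :
    Function.IsPeriodicPt shiftLP n w := by
  rw [Function.IsPeriodicPt, Function.IsFixedPt, iterate_shiftLP hw, Fin.natCast_self,
    lPos_zero hw, Fin.val_zero, shift_zero, projLP_of_isLeftPreferred hw]

end Orbit

lemma entryKey_injective : Function.Injective (entryKey (n := n)) := by
  rintro ⟨a, _ | _⟩ ⟨b, _ | _⟩ h <;> simp [entryKey, Prod.ext_iff, Fin.ext_iff] at h ⊢ <;> omega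

def lexKey (w : GaussCode n) : Lex (Fin (2 * n) → ℕ) :=
  toLex fun i => entryKey (w i)

lemma lexKey_injective : Function.Injective (lexKey (n := n)) :=
  fun _ _ h => Equiv.ext fun i => entryKey_injective (congrFun h i)

lemma lexLt_iff_lexKey_lt {w w' : GaussCode n} : lexLt w w' ↔ lexKey w < lexKey w' :=
  ⟨fun ⟨i, hi, h⟩ => ⟨i, fun k hk => by simp [lexKey, hi k hk], h⟩,
    fun ⟨i, hi, h⟩ => ⟨i, fun k hk => entryKey_injective (hi k hk), h⟩⟩

lemma lexLe_iff_lexKey_le {w w' : GaussCode n} : lexLe w w' ↔ lexKey w ≤ lexKey w' := by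
  rw [lexLe, lexLt_iff_lexKey_lt, ← lexKey_injective.eq_iff]
  exact le_iff_eq_or_lt.symm

end GaussCode

open GaussCode in
/-- the `shift^LP`-orbit of a left preferred Gauss code contains
exactly one left canonical Gauss code, namely its lexicographically smallest
element. -/
theorem stmt11 (n : ℕ) [NeZero n] (w : GaussCode n) (hw : IsLeftPreferred w) :
    (∃! v : GaussCode n, (∃ k < n, v = shiftLP^[k] w) ∧ IsLeftCanonical v) ∧
    (∀ v : GaussCode n, ((∃ k < n, v = shiftLP^[k] w) ∧ IsLeftCanonical v) →
      ∀ k < n, lexLe v (shiftLP^[k] w)) := by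
  have hcanon : ∀ k, IsLeftCanonical (shiftLP^[k] w) ↔
      ∀ j < n, lexKey (shiftLP^[k] w) ≤ lexKey (shiftLP^[j] w) := fun k => by
    simp only [IsLeftCanonical, lexLe_iff_lexKey_le, isLeftPreferred_iterate_shiftLP hw, true_and]
    exact (isPeriodicPt_shiftLP hw).forall_iterate_iterate_iff (Nat.pos_of_neZero n) k
      (fun v => lexKey (shiftLP^[k] w) ≤ lexKey v)
  obtain ⟨k₀, hk₀, hmin⟩ := (Finset.range n).exists_min_image (fun k => lexKey (shiftLP^[k] w))
    ⟨0, Finset.mem_range.2 (Nat.pos_of_neZero n)⟩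
  simp only [Finset.mem_range] at hk₀ hmin
  refine ⟨⟨shiftLP^[k₀] w, ⟨⟨k₀, hk₀, rfl⟩, (hcanon k₀).2 hmin⟩, ?_⟩, ?_⟩
  · rintro _ ⟨⟨k, hk, rfl⟩, hv⟩
    exact lexKey_injective (le_antisymm ((hcanon k).1 hv k₀ hk₀) (hmin k hk))
  · rintro _ ⟨⟨k, -, rfl⟩, hv⟩ j hj
    exact lexLe_iff_lexKey_le.2 ((hcanon k).1 hv j hj)
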